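/- arXiv:2203.09441 — 6 statements merged into one kernel-verified Lean document; each statement's English description precedes it below -/
import Mathlib

section
/- Let t be the real sequence with t_2 = 1/6, t_3 = 1/4, and t_{n} = (3/4)·t_{n-1} − (1/24)·t_{n-2} for n ≥ 4 (t_1 = 0). No two consecutive terms t_r, t_{r+1} with r ≥ 2 are such that t_{r+1}/t_r = t_{r+2}/t_{r+1}; equivalently, the vectors (t_r, t_{r+1}) and (t_{r+1}, t_{r+2}) are never co-linear (scalar multiples of each other) for r ≥ 2. -/
theorem stmt_4 (t : ℕ → ℝ)
    (h1 : t 1 = 0) (h2 : t 2 = 1/6) (h3 : t 3 = 1/4)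
    (hrec : ∀ n, 4 ≤ n → t n = (3/4) * t (n-1) - (1/24) * t (n-2)) :
    ∀ r, 2 ≤ r →
      ¬ ∃ α : ℝ, α ≠ 0 ∧ t (r+1) = α * t r ∧ t (r+2) = α * t (r+1) := by
  have h4 : t 4 = 13/72 := by
    have := hrec 4 (by norm_num)
    norm_num [h2, h3] at this
    linarith
  have key : ∀ k : ℕ, t (k+2) * t (k+4) - t (k+3)^2 = -7/216 * (1/24)^k := by
    intro k
    induction k with
    | zero => simp [h2, h3, h4]; ring
    | succ n ih =>
      have e1 : t (n+4) = (3/4) * t (n+3) - (1/24) * t (n+2) := by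
        have := hrec (n+4) (by omega)
        simpa using this
      have e2 : t (n+5) = (3/4) * t (n+4) - (1/24) * t (n+3) := by
        have := hrec (n+5) (by omega)
        simpa using this
      have : t (n+3) * t (n+5) - t (n+4)^2 = (1/24) * (t (n+2) * t (n+4) - t (n+3)^2) := by
        rw [e2, e1]; ring
      rw [show n+1+2 = n+3 from rfl, show n+1+4 = n+5 from rfl, show n+1+3 = n+4 from rfl,
        this, ih]
      ring
  intro r hr ⟨α, hα, hv1, hv2⟩
  obtain ⟨k, rfl⟩ := Nat.exists_eq_add_of_le hr
  have hk := key k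
  have hv1' : t (k+3) = α * t (k+2) := by rw [show k+3 = 2+k+1 by omega, show k+2 = 2+k by omega]; exact hv1
  have hv2' : t (k+4) = α * t (k+3) := by rw [show k+4 = 2+k+2 by omega, show k+3 = 2+k+1 by omega]; exact hv2
  rw [hv1', hv2', hv1'] at hk
  have : (0:ℝ) = -7/216 * (1/24)^k := by rw [← hk]; ring
  have : ((1:ℝ)/24)^k > 0 := by positivity
  nlinarith [this]
end

section
/- For any nonnegative real matrix A ∈ R^{m×n}, the nonnegative column rank equals the nonnegative row rank: the smallest q such that there exist q vectors in R^m (resp. R^n) whose positive span contains every column (resp. row) of A is the same for columns and rows. -/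
open Matrix

/-- `v` lies in the positive (conic) span of the family `V`. -/
def InPosSpan {ι m : ℕ} (V : Fin ι → (Fin m → ℝ)) (v : Fin m → ℝ) : Prop :=
  ∃ α : Fin ι → ℝ, (∀ k, 0 ≤ α k) ∧ v = ∑ k, α k • V k

/-- The nonnegative column rank of a matrix: the least `q` such that some
`q` vectors in `ℝᵐ` positively span all columns of `A`. -/
noncomputable def cRankPlus {m n : ℕ} (A : Matrix (Fin m) (Fin n) ℝ) : ℕ :=
  sInf {q : ℕ | ∃ V : Fin q → (Fin m → ℝ),
    ∀ j : Fin n, InPosSpan V (fun i => A i j)}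

/-- The nonnegative row rank of a matrix: the least `q` such that some
`q` vectors in `ℝⁿ` positively span all rows of `A`. -/
noncomputable def rRankPlus {m n : ℕ} (A : Matrix (Fin m) (Fin n) ℝ) : ℕ :=
  sInf {q : ℕ | ∃ V : Fin q → (Fin n → ℝ),
    ∀ i : Fin m, InPosSpan V (fun j => A i j)}

/-- Key algebraic identity: rewriting a linear combination of `N` in terms of
the "tilted" generators. -/
lemma key_identity {M : Type*} [AddCommGroup M] [Module ℝ M] {q : ℕ} (N : Fin q → M)
    (c d : Fin q → ℝ) (s0 : Fin q) (hD : d s0 ≠ 0) (τ φ : ℝ)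
    (hφ : φ = ∑ t, c t * d t) :
    ∑ t, c t • N t =
      ∑ t, (if t = s0 then φ else c t + τ * φ) •
        (if t = s0 then (d s0)⁻¹ • N s0 - τ • (∑ s, (N s - (d s / d s0) • N s0))
         else N t - (d t / d s0) • N s0) := by
  classical
  set W : Fin q → M := fun t => N t - (d t / d s0) • N s0 with hWdef
  set S : M := ∑ s, W s with hSdef
  have hW0 : W s0 = 0 := by
    simp only [hWdef, div_self hD, one_smul, sub_self]
  have step1 : ∀ t : Fin q,
      (if t = s0 then φ else c t + τ * φ) •
        (if t = s0 then (d s0)⁻¹ • N s0 - τ • S else W t)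
      = (c t + τ * φ) • W t
        + (if t = s0 then φ • ((d s0)⁻¹ • N s0 - τ • S) - (c s0 + τ * φ) • W s0
           else 0) := by
    intro t
    by_cases h : t = s0
    · subst h; simp only [if_pos rfl, if_true]; abel
    · simp only [if_neg h, add_zero]
  have step2 : (∑ t, (if t = s0 then φ else c t + τ * φ) •
        (if t = s0 then (d s0)⁻¹ • N s0 - τ • S else W t))
      = (∑ t, (c t + τ * φ) • W t)
        + (φ • ((d s0)⁻¹ • N s0 - τ • S) - (c s0 + τ * φ) • W s0) := by
    rw [Finset.sum_congr rfl fun t _ => step1 t, Finset.sum_add_distrib,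
      Finset.sum_ite_eq' Finset.univ s0
        (fun _ => φ • ((d s0)⁻¹ • N s0 - τ • S) - (c s0 + τ * φ) • W s0)]
    simp
  have step3 : (∑ t, (c t + τ * φ) • W t)
      = (∑ t, c t • W t) + (τ * φ) • S := by
    rw [hSdef, Finset.smul_sum, ← Finset.sum_add_distrib]
    exact Finset.sum_congr rfl fun t _ => by rw [add_smul]
  have step4 : (∑ t, c t • W t)
      = (∑ t, c t • N t) - (φ / d s0) • N s0 := by
    have h1 : ∀ t : Fin q, c t • W t = c t • N t - (c t * (d t / d s0)) • N s0 := by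
      intro t; rw [hWdef]; rw [smul_sub, smul_smul]
    rw [Finset.sum_congr rfl fun t _ => h1 t, Finset.sum_sub_distrib, ← Finset.sum_smul]
    congr 1
    congr 1
    rw [hφ, Finset.sum_div]
    exact Finset.sum_congr rfl fun t _ => (mul_div_assoc _ _ _).symm
  rw [step2, step3, step4, hW0, smul_zero, sub_zero, div_eq_mul_inv]
  rw [smul_sub, smul_smul, smul_smul, mul_comm τ φ]
  abel

/-- Core lemma: nonnegative vectors lying in the span of nonnegative vectors
`N` lie in the positive span of `q` suitable vectors. -/
lemma core {q m n : ℕ} (u : Fin n → Fin m → ℝ) (hu : ∀ j i, 0 ≤ u j i)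
    (N : Fin q → Fin m → ℝ) (hN : ∀ k i, 0 ≤ N k i)
    (c : Fin n → Fin q → ℝ) (hc : ∀ j, u j = ∑ k, c j k • N k) :
    ∃ V : Fin q → (Fin m → ℝ), ∀ j, InPosSpan V (u j) := by
  classical
  set d : Fin q → ℝ := fun k => ∑ i, N k i with hd_def
  set φ : Fin n → ℝ := fun j => ∑ i, u j i with hφ_def
  have hφc : ∀ j, φ j = ∑ k, c j k * d k := by
    intro j
    have : φ j = ∑ i, ∑ k, c j k * N k i := by
      simp only [hφ_def]
      refine Finset.sum_congr rfl fun i _ => ?_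
      rw [hc j]
      simp [Finset.sum_apply]
    rw [this, Finset.sum_comm]
    exact Finset.sum_congr rfl fun k _ => by rw [← Finset.mul_sum]
  have hφ0 : ∀ j, 0 ≤ φ j := fun j => Finset.sum_nonneg fun i _ => hu j i
  have hu0 : ∀ j, φ j = 0 → u j = 0 := by
    intro j hj
    funext i
    have := (Finset.sum_eq_zero_iff_of_nonneg (fun i _ => hu j i)).mp hj
    exact this i (Finset.mem_univ i)
  by_cases hd : ∀ k, d k = 0
  · -- all N vanish, so all u vanish
    have hN0 : ∀ k, N k = 0 := by
      intro k
      funext i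
      have := (Finset.sum_eq_zero_iff_of_nonneg (fun i _ => hN k i)).mp (hd k)
      exact this i (Finset.mem_univ i)
    refine ⟨fun _ => 0, fun j => ⟨0, fun k => le_refl 0, ?_⟩⟩
    rw [hc j]
    simp [hN0]
  · push_neg at hd
    obtain ⟨s0, hs0⟩ := hd
    set τ : ℝ := ∑ j : Fin n, ∑ k : Fin q,
        (if φ j = 0 then 0 else max 0 (-(c j k) / φ j)) with hτ_def
    have hτ_ge : ∀ j k, (if φ j = 0 then 0 else max 0 (-(c j k) / φ j)) ≤ τ := by
      intro j k
      have h1 : ∀ j' k', (0:ℝ) ≤ (if φ j' = 0 then 0 else max 0 (-(c j' k') / φ j')) := by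
        intro j' k'
        split
        · exact le_refl 0
        · exact le_max_left 0 _
      calc (if φ j = 0 then 0 else max 0 (-(c j k) / φ j))
          ≤ ∑ k' : Fin q, (if φ j = 0 then 0 else max 0 (-(c j k') / φ j)) :=
            Finset.single_le_sum (fun k' _ => h1 j k') (Finset.mem_univ k)
        _ ≤ τ := Finset.single_le_sum
            (fun j' _ => Finset.sum_nonneg fun k' _ => h1 j' k') (Finset.mem_univ j)
    have hα : ∀ j k, 0 < φ j → 0 ≤ c j k + τ * φ j := by
      intro j k hj
      have h2 : -(c j k) / φ j ≤ τ :=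
        le_trans (le_max_right 0 _) (by simpa [ne_of_gt hj] using hτ_ge j k)
      have h3 : -(c j k) / φ j * φ j ≤ τ * φ j :=
        mul_le_mul_of_nonneg_right h2 (le_of_lt hj)
      rw [div_mul_cancel₀ _ (ne_of_gt hj)] at h3
      linarith
    refine ⟨fun t => if t = s0 then (d s0)⁻¹ • N s0
        - τ • (∑ s, (N s - (d s / d s0) • N s0))
      else N t - (d t / d s0) • N s0, fun j => ?_⟩
    by_cases hj : φ j = 0
    · refine ⟨0, fun k => le_refl 0, ?_⟩
      rw [hu0 j hj]
      simp
    · have hjpos : 0 < φ j := lt_of_le_of_ne (hφ0 j) (Ne.symm hj)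
      refine ⟨fun t => if t = s0 then φ j else c j t + τ * φ j, fun k => ?_, ?_⟩
      · dsimp only
        split
        · exact hφ0 j
        · exact hα j k hjpos
      · rw [hc j]
        exact key_identity N (c j) d s0 hs0 τ (φ j) (hφc j)

/-- Monotone step: for a nonnegative matrix, the column rank is at most the row rank. -/
lemma crank_le_rrank {m n : ℕ} (A : Matrix (Fin m) (Fin n) ℝ)
    (hA : ∀ i j, 0 ≤ A i j) : cRankPlus A ≤ rRankPlus A := by
  classical
  have hne : {q : ℕ | ∃ V : Fin q → (Fin n → ℝ),
      ∀ i : Fin m, InPosSpan V (fun j => A i j)}.Nonempty := by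
    refine ⟨n, fun k => Pi.single k 1, fun i => ⟨fun k => A i k, fun k => hA i k, ?_⟩⟩
    funext j
    rw [Finset.sum_apply]
    simp [Pi.single_apply, mul_ite]
  have hmem := Nat.sInf_mem hne
  obtain ⟨W, hW⟩ := hmem
  choose β hβ0 hβ using hW
  have hc : ∀ j : Fin n, (fun i => A i j) = ∑ k, (fun t => W t j) k • (fun i => β i k) := by
    intro j
    funext i
    rw [Finset.sum_apply]
    have := congrFun (hβ i) j
    rw [Finset.sum_apply] at this
    simp only [Pi.smul_apply, smul_eq_mul] at this ⊢
    rw [this]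
    exact Finset.sum_congr rfl fun k _ => mul_comm _ _
  obtain ⟨V, hV⟩ := core (fun j i => A i j) (fun j i => hA i j)
    (fun k i => β i k) (fun k i => hβ0 i k) (fun j k => W k j) hc
  exact Nat.sInf_le ⟨V, hV⟩

lemma rrank_eq_crank_transpose {m n : ℕ} (A : Matrix (Fin m) (Fin n) ℝ) :
    rRankPlus A = cRankPlus Aᵀ := rfl

theorem stmt_5 {m n : ℕ} (A : Matrix (Fin m) (Fin n) ℝ)
    (hA : ∀ i j, 0 ≤ A i j) :
    cRankPlus A = rRankPlus A := by
  refine le_antisymm (crank_le_rrank A hA) ?_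
  have h := crank_le_rrank Aᵀ (fun i j => hA j i)
  rw [rrank_eq_crank_transpose A]
  rw [rrank_eq_crank_transpose Aᵀ] at h
  simpa using h
end

section
/- Let W = (G, θ) be a weighted CFG obtained from a positive multiplicity tree automaton A = (Σ, R_+, d, μ, λ) by the standard transformation (non-terminals V_1,...,V_d plus start S; θ(S → V_i) = λ[i]; θ(V_i → σ) = μ_σ[i] for σ ∈ Σ_0; θ(V_i → V_{i_1}···V_{i_k}) = c^i_{i_1,...,i_k}, the corresponding coefficient of μ_σ for σ ∈ Σ_k). Then for every skeletal tree s, if μ(s) = (v_1,...,v_d) is the vector computed by A on s, then v_i equals the total weight under W of all derivation trees with root label V_i whose skeletal form is s. -/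
/-- Skeletal trees over a set `Sig0` of terminal (leaf) symbols: internal
nodes carry the placeholder `?`. -/
inductive Sk (Sig0 : Type) : Type
  | leaf : Sig0 → Sk Sig0
  | node : List (Sk Sig0) → Sk Sig0

/-- Bottom-up evaluation of a skeletal tree by a multiplicity tree automaton
of dimension `d` whose transitions are given by leaf vectors `μleaf` and by
the coefficients `coef i (i₁,…,i_k)` of the multilinear maps `μ_?`. -/
noncomputable def Sk.eval {Sig0 : Type} {d : ℕ}
    (μleaf : Sig0 → Fin d → ℝ) (coef : Fin d → List (Fin d) → ℝ) :
    Sk Sig0 → Fin d → ℝ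
  | .leaf a => μleaf a
  | .node ts => fun i =>
      ∑ g : Fin ts.length → Fin d,
        coef i (List.ofFn g) *
          ∏ j : Fin ts.length, Sk.eval μleaf coef (ts.get j) (g j)
decreasing_by
  have hm : ts.get j ∈ ts := by simp
  have := List.sizeOf_lt_of_mem hm
  simp only [Sk.node.sizeOf_spec]
  omega

/-- Derivation trees of the weighted grammar extracted from a PMTA:
`term i σ` stands for an application of the rule `V_i → σ`, and
`node i ts` for an application of the rule `V_i → V_{i₁} ⋯ V_{i_k}`. -/
inductive DT (Sig0 : Type) (d : ℕ) : Type
  | term : Fin d → Sig0 → DT Sig0 d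
  | node : Fin d → List (DT Sig0 d) → DT Sig0 d

namespace DT

/-- The non-terminal `V_i` labeling the root. -/
def rootIdx {Sig0 : Type} {d : ℕ} : DT Sig0 d → Fin d
  | .term i _ => i
  | .node i _ => i

/-- The weight of a derivation tree in the extracted grammar:
`θ(V_i → σ) = μ_σ[i]` and `θ(V_i → V_{i₁}⋯V_{i_k}) = c^i_{i₁,…,i_k}`. -/
def wt {Sig0 : Type} {d : ℕ}
    (μleaf : Sig0 → Fin d → ℝ) (coef : Fin d → List (Fin d) → ℝ) :
    DT Sig0 d → ℝ
  | .term i a => μleaf a i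
  | .node i ts =>
      coef i (ts.map rootIdx) * (ts.attach.map (fun x => wt μleaf coef x.1)).prod
decreasing_by
  have := List.sizeOf_lt_of_mem x.2
  simp only [DT.node.sizeOf_spec]
  omega

/-- The skeletal form of a derivation tree. -/
def skel {Sig0 : Type} {d : ℕ} : DT Sig0 d → Sk Sig0
  | .term _ a => .leaf a
  | .node _ ts => .node (ts.attach.map (fun x => skel x.1))
decreasing_by
  have := List.sizeOf_lt_of_mem x.2
  simp only [DT.node.sizeOf_spec]
  omega

/-- `Wnt μleaf coef i s` : the total weight of all derivation trees rooted
at the non-terminal `V_i` whose skeletal form is `s`. -/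
noncomputable def Wnt {Sig0 : Type} {d : ℕ}
    (μleaf : Sig0 → Fin d → ℝ) (coef : Fin d → List (Fin d) → ℝ)
    (i : Fin d) (s : Sk Sig0) : ℝ :=
  ∑' dt : {dt : DT Sig0 d // rootIdx dt = i ∧ skel dt = s},
    wt μleaf coef (dt : DT Sig0 d)

end DT

namespace DT

variable {Sig0 : Type} {d : ℕ}

/-- The list of children of the root. -/
def children : DT Sig0 d → List (DT Sig0 d)
  | .term _ _ => []
  | .node _ ts => ts

lemma skel_term (i : Fin d) (a : Sig0) :
    skel (DT.term i a : DT Sig0 d) = Sk.leaf a := by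
  rw [skel]

lemma skel_node (i : Fin d) (ts : List (DT Sig0 d)) :
    skel (DT.node i ts) = Sk.node (ts.map skel) := by
  rw [skel]
  congr 1
  exact List.attach_map_val

lemma wt_term (μleaf : Sig0 → Fin d → ℝ) (coef : Fin d → List (Fin d) → ℝ)
    (i : Fin d) (a : Sig0) : wt μleaf coef (.term i a) = μleaf a i := by
  rw [wt]

lemma wt_node (μleaf : Sig0 → Fin d → ℝ) (coef : Fin d → List (Fin d) → ℝ)
    (i : Fin d) (ts : List (DT Sig0 d)) :
    wt μleaf coef (.node i ts)
      = coef i (ts.map rootIdx) * (ts.map (wt μleaf coef)).prod := by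
  rw [wt]
  congr 2
  exact List.attach_map_val

lemma eq_term_of_skel_leaf {dt : DT Sig0 d} {a : Sig0} (h : skel dt = Sk.leaf a) :
    dt = DT.term (rootIdx dt) a := by
  cases dt with
  | term j b =>
    rw [skel_term] at h
    injection h with h
    subst h; rfl
  | node j ts =>
    rw [skel_node] at h
    exact absurd h (by simp)

lemma children_spec {dt : DT Sig0 d} {us : List (Sk Sig0)}
    (h : skel dt = Sk.node us) :
    dt = DT.node (rootIdx dt) (children dt) ∧ (children dt).map skel = us := by
  cases dt with
  | term j a =>
    rw [skel_term] at h
    exact absurd h (by simp)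
  | node j ts =>
    rw [skel_node] at h
    exact ⟨rfl, by injection h⟩

lemma children_length {dt : DT Sig0 d} {us : List (Sk Sig0)}
    (h : skel dt = Sk.node us) : (children dt).length = us.length := by
  rw [← (children_spec h).2, List.length_map]

/-- The `j`-th child together with a proof of its skeleton. -/
def childGet {dt : DT Sig0 d} {us : List (Sk Sig0)} (h : skel dt = Sk.node us)
    (j : Fin us.length) : {x : DT Sig0 d // skel x = us.get j} :=
  ⟨(children dt).get (Fin.cast (children_length h).symm j), by
    have h2 := (children_spec h).2
    have hlt : (j : ℕ) < (children dt).length := by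
      rw [children_length h]; exact j.2
    calc skel ((children dt).get (Fin.cast (children_length h).symm j))
        = ((children dt).map skel)[(j : ℕ)]'(by simpa using hlt) :=
          (List.getElem_map skel).symm
      _ = us.get j := by
          rw [List.get_eq_getElem]
          exact List.getElem_of_eq h2 _⟩

lemma finite_skel : ∀ s : Sk Sig0, Finite {dt : DT Sig0 d // skel dt = s}
  | .leaf a => by
    apply Finite.of_injective (fun x : {dt : DT Sig0 d // skel dt = Sk.leaf a} => rootIdx x.1)
    rintro ⟨dt1, h1⟩ ⟨dt2, h2⟩ hr
    simp only at hr
    apply Subtype.ext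
    simp only
    rw [eq_term_of_skel_leaf h1, eq_term_of_skel_leaf h2, hr]
  | .node us => by
    have F : ∀ j : Fin us.length, Finite {x : DT Sig0 d // skel x = us.get j} :=
      fun j => finite_skel (us.get j)
    apply Finite.of_injective
      (fun x : {dt : DT Sig0 d // skel dt = Sk.node us} =>
        ((rootIdx x.1, fun j => childGet x.2 j) :
          Fin d × (∀ j : Fin us.length, {x : DT Sig0 d // skel x = us.get j})))
    rintro ⟨dt1, h1⟩ ⟨dt2, h2⟩ hr
    simp only [Prod.mk.injEq] at hr
    obtain ⟨hroot, hch⟩ := hr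
    apply Subtype.ext
    simp only
    have hc : children dt1 = children dt2 := by
      apply List.ext_get
      · rw [children_length h1, children_length h2]
      · intro n hn1 hn2
        have hn : n < us.length := by rwa [children_length h1] at hn1
        have := congrArg Subtype.val (congrFun hch ⟨n, hn⟩)
        simpa [childGet] using this
    rw [(children_spec h1).1, (children_spec h2).1, hroot, hc]
termination_by s => sizeOf s
decreasing_by
  have hm : us.get j ∈ us := by simp
  have := List.sizeOf_lt_of_mem hm
  simp only [Sk.node.sizeOf_spec]
  omega

lemma finite_sub (i : Fin d) (s : Sk Sig0) :
    Finite {dt : DT Sig0 d // rootIdx dt = i ∧ skel dt = s} := by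
  have := finite_skel (Sig0 := Sig0) (d := d) s
  apply Finite.of_injective
    (fun x : {dt : DT Sig0 d // rootIdx dt = i ∧ skel dt = s} =>
      (⟨x.1, x.2.2⟩ : {dt : DT Sig0 d // skel dt = s}))
  intro x y hr
  have h' := congrArg Subtype.val hr
  exact Subtype.ext h'

lemma eval_eq_Wnt (μleaf : Sig0 → Fin d → ℝ) (coef : Fin d → List (Fin d) → ℝ) :
    ∀ (s : Sk Sig0) (i : Fin d), Sk.eval μleaf coef s i = Wnt μleaf coef i s
  | .leaf a, i => by
    classical
    letI : Fintype {dt : DT Sig0 d // rootIdx dt = i ∧ skel dt = Sk.leaf a} :=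
      @Fintype.ofFinite _ (finite_sub i (Sk.leaf a))
    letI : Unique {dt : DT Sig0 d // rootIdx dt = i ∧ skel dt = Sk.leaf a} := by
      refine ⟨⟨⟨DT.term i a, rfl, skel_term i a⟩⟩, ?_⟩
      rintro ⟨dt, hr, hs⟩
      apply Subtype.ext
      simp only
      rw [eq_term_of_skel_leaf hs, hr]
    rw [Wnt, tsum_fintype, Fintype.sum_unique]
    show Sk.eval μleaf coef (Sk.leaf a) i = wt μleaf coef (DT.term i a)
    rw [Sk.eval, wt_term]
  | .node us, i => by
    classical
    -- abbreviations
    letI S : Fin us.length → Type := fun j => {x : DT Sig0 d // skel x = us.get j}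
    haveI : ∀ j, Finite (S j) := fun j => finite_skel (us.get j)
    letI : ∀ j, Fintype (S j) := fun j => Fintype.ofFinite _
    letI T := {dt : DT Sig0 d // rootIdx dt = i ∧ skel dt = Sk.node us}
    letI : Fintype T := @Fintype.ofFinite _ (finite_sub i (Sk.node us))
    letI S' : (Fin us.length → Fin d) → Fin us.length → Type := fun g j =>
      {x : DT Sig0 d // rootIdx x = g j ∧ skel x = us.get j}
    letI : ∀ g j, Fintype (S' g j) := fun g j => @Fintype.ofFinite _ (finite_sub _ _)
    -- the bijection sending a tuple of subtrees to a derivation tree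
    letI e : (∀ j, S j) → T := fun t =>
      ⟨DT.node i (List.ofFn fun j => (t j).1), rfl, by
        rw [skel_node, List.map_ofFn]
        congr 1
        conv_rhs => rw [← List.ofFn_get us]
        exact congrArg List.ofFn (funext fun j => (t j).2)⟩
    have hbij : Function.Bijective e := by
      constructor
      · intro t1 t2 ht
        have h1 : List.ofFn (fun j => (t1 j).1) = List.ofFn (fun j => (t2 j).1) := by
          have := congrArg Subtype.val ht
          simpa [e] using this
        funext j
        apply Subtype.ext
        exact congrFun (List.ofFn_injective h1) j
      · rintro ⟨dt, hr, hs⟩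
        refine ⟨fun j => childGet hs j, ?_⟩
        apply Subtype.ext
        simp only [e, childGet]
        conv_rhs => rw [(children_spec hs).1, hr]
        congr 1
        apply List.ext_get
        · simp [children_length hs]
        · intro n hn1 hn2
          simp [List.get_ofFn]
    have key : Wnt μleaf coef i (Sk.node us)
        = ∑ t : ∀ j, S j,
            coef i (List.ofFn fun j => rootIdx (t j).1) *
              ∏ j, wt μleaf coef (t j).1 := by
      rw [Wnt, tsum_fintype]
      refine (Fintype.sum_bijective e hbij _ _ ?_).symm
      intro t
      have he : (e t).1 = DT.node i (List.ofFn fun j => (t j).1) := rfl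
      rw [he, wt_node, List.map_ofFn, List.map_ofFn, List.prod_ofFn]
      rfl
    rw [key, ← Fintype.sum_fiberwise
        (fun t : ∀ j, S j => (fun j => rootIdx (t j).1 : Fin us.length → Fin d))]
    show Sk.eval μleaf coef (Sk.node us) i = _
    rw [Sk.eval]
    refine Finset.sum_congr rfl fun g _ => ?_
    -- rewrite the coefficient on the fibers
    have hfib : ∀ t : {t : ∀ j, S j // (fun j => rootIdx (t j).1) = g},
        coef i (List.ofFn fun j => rootIdx (t.1 j).1) * ∏ j, wt μleaf coef (t.1 j).1
          = coef i (List.ofFn g) * ∏ j, wt μleaf coef (t.1 j).1 := by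
      rintro ⟨t, ht⟩
      simp only
      rw [show (fun j => rootIdx (t j).1) = g from ht]
    rw [Finset.sum_congr rfl fun t _ => hfib t, ← Finset.mul_sum]
    congr 1
    -- the fiber is equivalent to a product of smaller subtypes
    letI E2 : {t : ∀ j, S j // (fun j => rootIdx (t j).1) = g} ≃ (∀ j, S' g j) :=
      { toFun := fun t => fun j => ⟨(t.1 j).1, congrFun t.2 j, (t.1 j).2⟩
        invFun := fun t => ⟨fun j => ⟨(t j).1, (t j).2.2⟩, funext fun j => (t j).2.1⟩
        left_inv := fun t => rfl
        right_inv := fun t => rfl }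
    have step : ∀ j : Fin us.length,
        Sk.eval μleaf coef (us.get j) (g j) = ∑ x : S' g j, wt μleaf coef x.1 := by
      intro j
      rw [eval_eq_Wnt μleaf coef (us.get j) (g j), Wnt, tsum_fintype]
    calc ∏ j, Sk.eval μleaf coef (us.get j) (g j)
        = ∏ j, ∑ x : S' g j, wt μleaf coef x.1 := by
          exact Finset.prod_congr rfl fun j _ => step j
      _ = ∑ t ∈ Fintype.piFinset (fun j => (Finset.univ : Finset (S' g j))),
            ∏ j, wt μleaf coef (t j).1 := by
          rw [Finset.prod_univ_sum]
      _ = ∑ t : ∀ j, S' g j, ∏ j, wt μleaf coef (t j).1 := by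
          rw [Fintype.piFinset_univ]
      _ = ∑ t : {t : ∀ j, S j // (fun j => rootIdx (t j).1) = g},
            ∏ j, wt μleaf coef (t.1 j).1 :=
          (Fintype.sum_equiv E2 _ _ fun t => rfl).symm
termination_by s => sizeOf s
decreasing_by
  have hm : us.get j ∈ us := by simp
  have := List.sizeOf_lt_of_mem hm
  simp only [Sk.node.sizeOf_spec]
  omega

end DT

theorem stmt_11 {Sig0 : Type} {d : ℕ}
    (μleaf : Sig0 → Fin d → ℝ) (coef : Fin d → List (Fin d) → ℝ)
    (lam : Fin d → ℝ)
    -- the automaton is a PMTA: all weights are nonnegative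
    (hleaf : ∀ a i, 0 ≤ μleaf a i)
    (hcoef : ∀ i l, 0 ≤ coef i l)
    (hlam : ∀ i, 0 ≤ lam i) :
    -- the i-th coordinate of the vector computed by the automaton on a
    -- skeletal tree `s` equals the total weight, in the extracted grammar,
    -- of the derivation trees rooted at `V_i` with skeletal form `s`
    ∀ (s : Sk Sig0) (i : Fin d),
      Sk.eval μleaf coef s i = DT.Wnt μleaf coef i s := by
  intro s i
  exact DT.eval_eq_Wnt μleaf coef s i
end

section
/- Conversely, for a weighted CFG (G, θ) with nonnegative weights, the PMTA A_G of dimension |V| + |Σ| constructed with λ = e_1 (indicator of the start symbol), μ_σ = e_{ι(σ)} for terminals σ, and μ_? encoding θ on rule coordinates, satisfies: for every skeletal tree t ∈ S(T(G)), W_G(t) = A_G(t). -/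
/-- Derivation trees of a CFG: leaves are terminals, internal nodes are
labeled by non-terminals. -/
inductive DTree (V Sig : Type) : Type
  | leaf : Sig → DTree V Sig
  | node : V → List (DTree V Sig) → DTree V Sig

namespace DTree

def rootSym {V Sig : Type} : DTree V Sig → V ⊕ Sig
  | .leaf a => .inr a
  | .node A _ => .inl A

/-- The skeletal form of a derivation tree. -/
def skel {V Sig : Type} : DTree V Sig → Sk Sig
  | .leaf a => .leaf a
  | .node _ ts => .node (ts.attach.map (fun x => skel x.1))
decreasing_by
  have := List.sizeOf_lt_of_mem x.2
  simp only [DTree.node.sizeOf_spec]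
  omega

/-- Validity of a derivation tree w.r.t. production rules `R`. -/
inductive Valid {V Sig : Type} (R : V → List (V ⊕ Sig) → Prop) : DTree V Sig → Prop
  | leaf (a : Sig) : Valid R (.leaf a)
  | node (A : V) (ts : List (DTree V Sig)) :
      R A (ts.map rootSym) → (∀ t, t ∈ ts → Valid R t) →
      Valid R (.node A ts)

/-- The weight of a derivation tree: the product of the weights of the
rules used at its nodes. -/
def wt {V Sig : Type} (θ : V → List (V ⊕ Sig) → ℝ) : DTree V Sig → ℝ
  | .leaf _ => 1
  | .node A ts => θ A (ts.map rootSym) * (ts.attach.map (fun x => wt θ x.1)).prod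
decreasing_by
  have := List.sizeOf_lt_of_mem x.2
  simp only [DTree.node.sizeOf_spec]
  omega

end DTree

section Construction

variable {nV nSig : ℕ}

/-- The leaf vectors of the PMTA `A_G` constructed from a WCFG:
`μ_σ = e_{ι(σ)}`. -/
def muLeafG (nV : ℕ) : Fin nSig → Fin (nV + nSig) → ℝ :=
  fun a i => if i = finSumFinEquiv (Sum.inr a) then 1 else 0

/-- The transition coefficients of `A_G`: on non-terminal coordinates they
encode `θ`, and they vanish on terminal coordinates. -/
def coefG (θ : Fin nV → List (Fin nV ⊕ Fin nSig) → ℝ) :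
    Fin (nV + nSig) → List (Fin (nV + nSig)) → ℝ :=
  fun i l =>
    match finSumFinEquiv.symm i with
    | Sum.inl A => θ A (l.map (fun j => finSumFinEquiv.symm j))
    | Sum.inr _ => 0

/-- The output vector of `A_G`: the indicator of the start symbol. -/
def lamG (nSig : ℕ) (S₀ : Fin nV) : Fin (nV + nSig) → ℝ :=
  fun i => if i = finSumFinEquiv (Sum.inl S₀) then 1 else 0

end Construction

open DTree in
/-- The weight a WCFG assigns to a skeletal tree `s`: the sum of the weights
of all valid derivation trees from the start symbol with skeletal form `s`. -/
noncomputable def WG {nV nSig : ℕ}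
    (R : Fin nV → List (Fin nV ⊕ Fin nSig) → Prop)
    (θ : Fin nV → List (Fin nV ⊕ Fin nSig) → ℝ)
    (S₀ : Fin nV) (s : Sk (Fin nSig)) : ℝ :=
  ∑' dt : {dt : DTree (Fin nV) (Fin nSig) //
      Valid R dt ∧ rootSym dt = Sum.inl S₀ ∧ skel dt = s},
    wt θ (dt : DTree (Fin nV) (Fin nSig))

/-!
Induction on the skeleton shows that coordinate `ι u` of the state vector of `A_G` on `s` is the
total weight of the derivation trees with skeleton `s` and root symbol `u`: a derivation tree with
skeleton `node ts` is a root label together with one derivation tree per child skeleton, and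
expanding the product of the children's coordinates, only the labelling by the children's actual
root symbols survives, where `μ_?` contributes exactly `θ` of the rule used at the root. Since
`λ = e_{ι(S₀)}`, the automaton sums the weights of all trees with skeleton `s` rooted at the start
symbol; there are finitely many, and the invalid ones weigh `0` because `θ` vanishes off `R`.
-/
namespace Sk

@[elab_as_elim]
theorem induction {Sig0 : Type} {P : Sk Sig0 → Prop} (leaf : ∀ a, P (.leaf a))
    (node : ∀ ts : List (Sk Sig0), (∀ t ∈ ts, P t) → P (.node ts)) (s : Sk Sig0) : P s :=
  Sk.rec (motive_1 := P) (motive_2 := fun ts => ∀ t ∈ ts, P t) leaf node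
    (fun _ h => absurd h List.not_mem_nil)
    (fun _ _ ht hts t hmem => (List.mem_cons.1 hmem).elim (· ▸ ht) (hts t)) s

end Sk

namespace DTree

variable {V Sig : Type}

@[elab_as_elim]
theorem induction {P : DTree V Sig → Prop} (leaf : ∀ a, P (.leaf a))
    (node : ∀ A ts, (∀ t ∈ ts, P t) → P (.node A ts)) (dt : DTree V Sig) : P dt :=
  DTree.rec (motive_1 := P) (motive_2 := fun ts => ∀ t ∈ ts, P t) leaf node
    (fun _ h => absurd h List.not_mem_nil)
    (fun _ _ ht hts t hmem => (List.mem_cons.1 hmem).elim (· ▸ ht) (hts t)) dt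

@[simp]
theorem skel_leaf (a : Sig) : (leaf a : DTree V Sig).skel = .leaf a := by
  rw [skel]

@[simp]
theorem skel_node (A : V) (ts : List (DTree V Sig)) :
    (node A ts).skel = .node (ts.map skel) := by
  rw [skel, List.attach_map_val]

@[simp]
theorem wt_leaf (θ : V → List (V ⊕ Sig) → ℝ) (a : Sig) : (leaf a : DTree V Sig).wt θ = 1 := by
  rw [wt]

@[simp]
theorem wt_node (θ : V → List (V ⊕ Sig) → ℝ) (A : V) (ts : List (DTree V Sig)) :
    (node A ts).wt θ = θ A (ts.map rootSym) * (ts.map (wt θ)).prod := by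
  rw [wt, List.attach_map_val]

theorem support_wt_subset_valid {R : V → List (V ⊕ Sig) → Prop} {θ : V → List (V ⊕ Sig) → ℝ}
    (hsupp : ∀ A α, ¬ R A α → θ A α = 0) : Function.support (wt θ) ⊆ {dt | Valid R dt} := by
  intro dt
  induction dt using DTree.induction with
  | leaf a => exact fun _ => .leaf a
  | node A ts ih =>
    intro hwt
    rw [Function.mem_support, wt_node, mul_ne_zero_iff] at hwt
    refine .node A ts (by_contra fun hR => hwt.1 (hsupp _ _ hR)) fun t ht => ih t ht ?_
    exact fun h0 => hwt.2 (List.prod_eq_zero (h0 ▸ List.mem_map_of_mem ht))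

theorem skel_eq_leaf_iff {dt : DTree V Sig} {a : Sig} : dt.skel = .leaf a ↔ dt = .leaf a := by
  cases dt <;> simp

theorem skel_eq_node_iff {dt : DTree V Sig} {ts : List (Sk Sig)} :
    dt.skel = .node ts ↔ ∃ A cs, dt = .node A cs ∧ cs.map skel = ts := by
  cases dt <;> simp

noncomputable def skelNodeEquiv (ts : List (Sk Sig)) :
    V × (∀ j : Fin ts.length, {dt : DTree V Sig // dt.skel = ts.get j}) ≃
      {dt : DTree V Sig // dt.skel = .node ts} :=
  Equiv.ofBijective
    (fun p => ⟨.node p.1 (List.ofFn fun j => (p.2 j).1), by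
      simp only [skel_node, List.map_ofFn, Function.comp_def, (p.2 _).2, List.ofFn_get]⟩)
    ⟨by
      rintro ⟨A, c⟩ ⟨A', c'⟩ h
      simp only [Subtype.mk.injEq, node.injEq, List.ofFn_inj] at h
      obtain ⟨rfl, h⟩ := h
      exact Prod.ext rfl (funext fun j => Subtype.ext (congrFun h j)),
    by
      rintro ⟨dt, h⟩
      obtain ⟨A, cs, rfl, rfl⟩ := skel_eq_node_iff.1 h
      refine ⟨⟨A, fun j => ⟨cs.get (j.cast (List.length_map _)), by simp⟩⟩, ?_⟩
      simp only [Subtype.mk.injEq, node.injEq, true_and]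
      exact List.ext_get (by simp) fun _ _ _ => by simp⟩

@[simp]
theorem coe_skelNodeEquiv (ts : List (Sk Sig))
    (p : V × (∀ j : Fin ts.length, {dt : DTree V Sig // dt.skel = ts.get j})) :
    (skelNodeEquiv ts p : DTree V Sig) = .node p.1 (List.ofFn fun j => (p.2 j).1) :=
  rfl

instance subsingleton_skel_fiber_leaf (a : Sig) :
    Subsingleton {dt : DTree V Sig // dt.skel = .leaf a} :=
  ⟨fun x y => Subtype.ext <| (skel_eq_leaf_iff.1 x.2).trans (skel_eq_leaf_iff.1 y.2).symm⟩

instance finite_skel_fiber [Finite V] (s : Sk Sig) : Finite {dt : DTree V Sig // dt.skel = s} := by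
  induction s using Sk.induction with
  | leaf a => infer_instance
  | node ts ih =>
    have : ∀ j : Fin ts.length, Finite {dt : DTree V Sig // dt.skel = ts.get j} :=
      fun j => ih _ (List.get_mem ts j)
    exact Finite.of_equiv _ (skelNodeEquiv ts)

noncomputable instance [Finite V] (s : Sk Sig) : Fintype {dt : DTree V Sig // dt.skel = s} :=
  Fintype.ofFinite _

end DTree

theorem Fintype.sum_mul_prod_sum_ite_eq {ι U R : Type*} [Fintype ι] [DecidableEq ι] [Fintype U]
    [DecidableEq U] [CommSemiring R] {α : ι → Type*} [∀ j, Fintype (α j)] (r : ∀ j, α j → U)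
    (w : ∀ j, α j → R) (F : (ι → U) → R) :
    ∑ h : ι → U, F h * ∏ j, ∑ c : α j, (if r j c = h j then w j c else 0) =
      ∑ c : (∀ j, α j), F (fun j => r j (c j)) * ∏ j, w j (c j) := by
  simp only [Fintype.prod_sum, Finset.mul_sum]
  rw [Finset.sum_comm]
  refine Finset.sum_congr rfl fun c _ => ?_
  have hprod : ∀ h : ι → U, (∏ j, if r j (c j) = h j then w j (c j) else 0) =
      if (fun j => r j (c j)) = h then ∏ j, w j (c j) else 0 := fun h => by
    simp only [Finset.prod_ite_zero, Finset.mem_univ, true_implies, funext_iff]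
  simp only [hprod, mul_ite, mul_zero, Finset.sum_ite_eq, Finset.mem_univ, if_true]

namespace DTree

variable {V Sig : Type} [Fintype V] [DecidableEq V] [DecidableEq Sig]

theorem sum_skel_node_ite_rootSym_eq (θ : V → List (V ⊕ Sig) → ℝ) (ts : List (Sk Sig)) (A : V) :
    ∑ dt : {dt : DTree V Sig // dt.skel = .node ts},
        (if dt.1.rootSym = .inl A then dt.1.wt θ else 0) =
      ∑ c : (∀ j : Fin ts.length, {dt : DTree V Sig // dt.skel = ts.get j}),
        θ A (List.ofFn fun j => (c j).1.rootSym) * ∏ j, (c j).1.wt θ := by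
  rw [← (skelNodeEquiv ts).sum_comp, Fintype.sum_prod_type_right]
  refine Finset.sum_congr rfl fun c _ => ?_
  simp [rootSym, List.map_ofFn, Function.comp_def, List.prod_ofFn]

theorem sum_skel_node_ite_rootSym_inr (θ : V → List (V ⊕ Sig) → ℝ) (ts : List (Sk Sig)) (b : Sig) :
    ∑ dt : {dt : DTree V Sig // dt.skel = .node ts},
        (if dt.1.rootSym = .inr b then dt.1.wt θ else 0) = 0 := by
  rw [← (skelNodeEquiv ts).sum_comp]
  simp [rootSym]

end DTree

section Construction

variable {nV nSig : ℕ}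

@[simp]
theorem muLeafG_finSumFinEquiv (a : Fin nSig) (u : Fin nV ⊕ Fin nSig) :
    muLeafG nV a (finSumFinEquiv u) = if u = .inr a then 1 else 0 := by
  simp only [muLeafG, EmbeddingLike.apply_eq_iff_eq]

@[simp]
theorem coefG_finSumFinEquiv_inl (θ : Fin nV → List (Fin nV ⊕ Fin nSig) → ℝ) (A : Fin nV)
    (l : List (Fin (nV + nSig))) :
    coefG θ (finSumFinEquiv (.inl A)) l = θ A (l.map finSumFinEquiv.symm) := by
  simp [coefG]

@[simp]
theorem coefG_finSumFinEquiv_inr (θ : Fin nV → List (Fin nV ⊕ Fin nSig) → ℝ) (b : Fin nSig)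
    (l : List (Fin (nV + nSig))) : coefG θ (finSumFinEquiv (.inr b)) l = 0 := by
  simp [coefG]

theorem sum_lamG_mul (S₀ : Fin nV) (x : Fin (nV + nSig) → ℝ) :
    ∑ i, lamG nSig S₀ i * x i = x (finSumFinEquiv (.inl S₀)) := by
  simp only [lamG, ite_mul, one_mul, zero_mul, Finset.sum_ite_eq', Finset.mem_univ, if_true]

theorem eval_muLeafG_coefG (θ : Fin nV → List (Fin nV ⊕ Fin nSig) → ℝ) (s : Sk (Fin nSig))
    (u : Fin nV ⊕ Fin nSig) :
    Sk.eval (muLeafG nV) (coefG θ) s (finSumFinEquiv u) =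
      ∑ dt : {dt : DTree (Fin nV) (Fin nSig) // dt.skel = s},
        (if dt.1.rootSym = u then dt.1.wt θ else 0) := by
  induction s using Sk.induction generalizing u with
  | leaf a =>
    rw [Sk.eval, Fintype.sum_subsingleton _ ⟨.leaf a, DTree.skel_leaf a⟩]
    simp only [muLeafG_finSumFinEquiv, DTree.rootSym, DTree.wt_leaf, eq_comm]
  | node ts ih =>
    rw [Sk.eval]
    beta_reduce
    rcases u with A | b
    · rw [DTree.sum_skel_node_ite_rootSym_eq, ← Fintype.sum_mul_prod_sum_ite_eq
        (α := fun j => {dt : DTree (Fin nV) (Fin nSig) // dt.skel = ts.get j})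
        (fun _ c => c.1.rootSym) (fun _ c => c.1.wt θ) (fun h => θ A (List.ofFn h))]
      refine Fintype.sum_equiv (.arrowCongr (.refl _) finSumFinEquiv.symm) _ _ fun g => ?_
      congr 1
      · rw [coefG_finSumFinEquiv_inl, List.map_ofFn]
        rfl
      · refine Finset.prod_congr rfl fun j _ => ?_
        rw [← ih _ (List.get_mem ts j)]
        simp
    · simp only [coefG_finSumFinEquiv_inr, zero_mul, Finset.sum_const_zero,
        DTree.sum_skel_node_ite_rootSym_inr]

end Construction

theorem stmt_13_general {nV nSig : ℕ}
    (R : Fin nV → List (Fin nV ⊕ Fin nSig) → Prop)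
    (θ : Fin nV → List (Fin nV ⊕ Fin nSig) → ℝ)
    (S₀ : Fin nV)
    (hsupp : ∀ A α, ¬ R A α → θ A α = 0) :
    -- on every skeletal tree of the grammar, the grammar weight equals the
    -- value computed by the constructed PMTA `A_G`
    ∀ s : Sk (Fin nSig),
      (∃ dt : DTree (Fin nV) (Fin nSig),
          DTree.Valid R dt ∧ DTree.rootSym dt = Sum.inl S₀ ∧ DTree.skel dt = s) →
      WG R θ S₀ s =
        ∑ i, lamG nSig S₀ i * Sk.eval (muLeafG nV) (coefG θ) s i := by
  intro s _
  have hvalid := DTree.support_wt_subset_valid (θ := θ) hsupp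
  calc WG R θ S₀ s
      = ∑' dt, {dt | DTree.Valid R dt ∧ dt.rootSym = .inl S₀ ∧ dt.skel = s}.indicator
          (DTree.wt θ) dt := tsum_subtype _ _
    _ = ∑' dt, {dt | DTree.skel dt = s}.indicator
          (fun dt => if dt.rootSym = .inl S₀ then dt.wt θ else 0) dt := by
        refine tsum_congr fun dt => ?_
        by_cases hv : DTree.Valid R dt
        · simp only [Set.indicator, Set.mem_ofPred_eq, hv, true_and]
          split_ifs <;> simp_all
        · simp [Set.indicator, hv, Function.notMem_support.1 (mt (@hvalid dt) hv)]
    _ = ∑' dt : {dt : DTree (Fin nV) (Fin nSig) // dt.skel = s},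
          (if dt.1.rootSym = .inl S₀ then dt.1.wt θ else 0) := (tsum_subtype _ _).symm
    _ = _ := by rw [tsum_fintype, sum_lamG_mul, eval_muLeafG_coefG]

theorem stmt_13 {nV nSig : ℕ}
    (R : Fin nV → List (Fin nV ⊕ Fin nSig) → Prop)
    (θ : Fin nV → List (Fin nV ⊕ Fin nSig) → ℝ)
    (S₀ : Fin nV)
    (hθ : ∀ A α, 0 ≤ θ A α)
    (hsupp : ∀ A α, ¬ R A α → θ A α = 0) :
    -- on every skeletal tree of the grammar, the grammar weight equals the
    -- value computed by the constructed PMTA `A_G`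
    ∀ s : Sk (Fin nSig),
      (∃ dt : DTree (Fin nV) (Fin nSig),
          DTree.Valid R dt ∧ DTree.rootSym dt = Sum.inl S₀ ∧ DTree.skel dt = s) →
      WG R θ S₀ s =
        ∑ i, lamG nSig S₀ i * Sk.eval (muLeafG nV) (coefG θ) s i :=
  stmt_13_general R θ S₀ hsupp
end

section
/- If a weighted CFG (G, θ) with nonnegative weights is invertible (A → α and B → α implies A = B), then the PMTA A_G constructed from it is co-linear: in every column of every transition matrix μ_σ (σ in any Σ_k) there is at most one non-zero entry. -/
theorem stmt_14 {nV nSig : ℕ}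
    (R : Fin nV → List (Fin nV ⊕ Fin nSig) → Prop)
    (θ : Fin nV → List (Fin nV ⊕ Fin nSig) → ℝ)
    (S₀ : Fin nV)
    (hθ : ∀ A α, 0 ≤ θ A α)
    (hsupp : ∀ A α, ¬ R A α → θ A α = 0)
    -- the grammar is invertible
    (hinv : ∀ A B α, R A α → R B α → A = B) :
    -- the constructed PMTA is co-linear: every column of every transition
    -- matrix has at most one non-zero entry
    (∀ (a : Fin nSig) (i i' : Fin (nV + nSig)),
        muLeafG nV a i ≠ 0 → muLeafG nV a i' ≠ 0 → i = i') ∧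
    (∀ (l : List (Fin (nV + nSig))) (i i' : Fin (nV + nSig)),
        coefG θ i l ≠ 0 → coefG θ i' l ≠ 0 → i = i') := by
  constructor
  · intro a i i' hi hi'
    simp only [muLeafG, ne_eq, ite_eq_right_iff, one_ne_zero] at hi hi'
    rw [not_forall] at hi hi'
    obtain ⟨hi, -⟩ := hi
    obtain ⟨hi', -⟩ := hi'
    rw [hi, hi']
  · intro l i i' hi hi'
    unfold coefG at hi hi'
    rcases hA : finSumFinEquiv.symm i with A | A
    · rcases hB : finSumFinEquiv.symm i' with B | B
      · rw [hA] at hi; rw [hB] at hi'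
        have hRA : R A (l.map (fun j => finSumFinEquiv.symm j)) := by
          by_contra h; exact hi (hsupp _ _ h)
        have hRB : R B (l.map (fun j => finSumFinEquiv.symm j)) := by
          by_contra h; exact hi' (hsupp _ _ h)
        have := hinv A B _ hRA hRB
        subst this
        have := hA.trans hB.symm
        exact finSumFinEquiv.symm.injective this
      · rw [hB] at hi'; exact absurd rfl hi'
    · rw [hA] at hi; exact absurd rfl hi
end

section
/- Let (T, C, H, B) be a closed and consistent observation table, with B = {b_1,...,b_d} a basis (every row of H is a nonnegative scalar multiple of a unique basis row, or zero). For trees t_1,...,t_p ∈ T with t = ?(t_1,...,t_p) ∈ T, one has H[t] = (∏_{i=1}^p α_i)·H[?(r_1,...,r_p)], where r_i = ⟦t_i⟧_B is the basis representative of t_i and α_i = c(t_i) its coefficient (H[t_i] = α_i·H[r_i]). -/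
variable {Sig0 ι : Type}

/-- `EqvH H t s` : the rows of `t` and `s` are co-linear (both zero or
nonzero scalar multiples of each other). -/
def EqvH (H : Sk Sig0 → ι → ℝ) (t s : Sk Sig0) : Prop :=
  (H t = 0 ∧ H s = 0) ∨ ∃ α : ℝ, α ≠ 0 ∧ H t = α • H s

theorem stmt_15 (H : Sk Sig0 → ι → ℝ) (T B : Set (Sk Sig0))
    (rep : Sk Sig0 → Sk Sig0) (co : Sk Sig0 → ℝ)
    (hBT : B ⊆ T)
    -- every row of the table is a scalar multiple of its (unique) basis
    -- representative
    (hrep : ∀ t ∈ T, rep t ∈ B ∧ H t = co t • H (rep t))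
    (hself : ∀ b ∈ B, rep b = b ∧ co b = 1)
    -- the table is closed: all one-step extensions of basis rows are in T
    (hclosed : ∀ ts : List (Sk Sig0), (∀ s ∈ ts, s ∈ B) → Sk.node ts ∈ T)
    -- zero-consistency
    (hzero : ∀ t ∈ T, H t = 0 →
      ∀ pre post : List (Sk Sig0), (∀ s ∈ pre, s ∈ T) → (∀ s ∈ post, s ∈ T) →
        H (Sk.node (pre ++ t :: post)) = 0)
    -- co-linear consistency
    (hcons : ∀ t₁ ∈ T, ∀ t₂ ∈ T, ∀ α : ℝ, α ≠ 0 → H t₁ = α • H t₂ →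
      ∀ pre post : List (Sk Sig0), (∀ s ∈ pre, s ∈ T) → (∀ s ∈ post, s ∈ T) →
        H (Sk.node (pre ++ t₁ :: post)) = α • H (Sk.node (pre ++ t₂ :: post))) :
    -- the expansion lemma
    ∀ ts : List (Sk Sig0), (∀ s ∈ ts, s ∈ T) → Sk.node ts ∈ T →
      H (Sk.node ts) = (ts.map co).prod • H (Sk.node (ts.map rep)) := by
  have key : ∀ post : List (Sk Sig0), ∀ pre : List (Sk Sig0),
      (∀ s ∈ pre, s ∈ T) → (∀ s ∈ post, s ∈ T) →
      H (Sk.node (pre ++ post)) =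
        (post.map co).prod • H (Sk.node (pre ++ post.map rep)) := by
    intro post
    induction post with
    | nil => intro pre _ _; simp
    | cons t rest ih =>
      intro pre hpre hpost
      have htT : t ∈ T := hpost t (by simp)
      have hrestT : ∀ s ∈ rest, s ∈ T := fun s hs => hpost s (by simp [hs])
      have hrepT : rep t ∈ T := hBT (hrep t htT).1
      have hrestrepT : ∀ s ∈ rest.map rep, s ∈ T := by
        intro s hs
        obtain ⟨a, ha, rfl⟩ := List.mem_map.1 hs
        exact hBT (hrep a (hrestT a ha)).1
      by_cases hHt : H t = 0
      · -- both sides are zero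
        have hL : H (Sk.node (pre ++ t :: rest)) = 0 :=
          hzero t htT hHt pre rest hpre hrestT
        by_cases hco : co t = 0
        · simp [hL, hco]
        · have hHrep : H (rep t) = 0 := by
            have := (hrep t htT).2
            rw [hHt] at this
            exact (smul_eq_zero.1 this.symm).resolve_left hco
          have hR : H (Sk.node (pre ++ rep t :: rest.map rep)) = 0 :=
            hzero (rep t) hrepT hHrep pre (rest.map rep) hpre hrestrepT
          simp [hL, hR]
      · have hco : co t ≠ 0 := by
          intro h
          apply hHt
          rw [(hrep t htT).2, h, zero_smul]
        have step := hcons t htT (rep t) hrepT (co t) hco (hrep t htT).2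
          pre rest hpre hrestT
        have hrec := ih (pre ++ [rep t])
          (by intro s hs
              rcases List.mem_append.1 hs with h | h
              · exact hpre s h
              · simp at h; subst h; exact hrepT)
          hrestT
        simp only [List.append_assoc, List.singleton_append] at hrec
        rw [step, hrec, List.map_cons, List.prod_cons, smul_smul, List.map_cons]
  intro ts hts _
  exact key ts [] (by simp) hts
end
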